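/- Let $n\geq 3$ and let $\mathcal{L}_A$ be the $n\times n$ matrix with diagonal entries $\frac{2}{3}$, super/sub-diagonal entries $-\frac{1}{3}$, and corner entries $-\frac{1}{3}$ in positions $(1,n),(n,1)$. Then the sum of all $(n-2)\times(n-2)$ principal minors of $\mathcal{L}_A$ (over all pairs of deleted indices) equals $\frac{n^{2}(n^{2}-1)}{4\cdot 3^{n-1}}$. -/

import Mathlib

/-!
`LA n` is circulant, so the principal minor obtained by deleting `i < j` only depends on
`d = j - i`. Rotating `i` to `0`, deleting `0` and `d` from the cycle leaves two disjoint paths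
with `d - 1` and `n - 1 - d` vertices. A path on `k` vertices has the tridiagonal matrix
`tridiag k (2/3) (-1/3)`, whose determinant `(k + 1) / 3 ^ k` follows from the recurrence
`D (k + 2) = 2/3 D (k + 1) - 1/9 D k`. Hence the minor is `d (n - d) / 3 ^ (n - 2)`, and summing
over all pairs gives `n² (n² - 1) / 12 / 3 ^ (n - 2)`.
-/

/-- The matrix `𝓛_A`: diagonal `2/3`, subdiagonal and superdiagonal `-1/3`,
corner entries `-1/3` at positions `(1,n)` and `(n,1)`. -/
noncomputable def LA (n : ℕ) : Matrix (Fin n) (Fin n) ℝ :=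
  Matrix.of fun i j =>
    if i = j then 2 / 3
    else if i.val + 1 = j.val ∨ j.val + 1 = i.val then -(1 / 3)
    else if (i.val = 0 ∧ j.val = n - 1) ∨ (i.val = n - 1 ∧ j.val = 0) then -(1 / 3)
    else 0

open Finset Matrix

section Tridiagonal

variable {R : Type*} [CommRing R]

def tridiag (k : ℕ) (x y : R) : Matrix (Fin k) (Fin k) R :=
  Matrix.of fun i j => if i = j then x else if i.val + 1 = j.val ∨ j.val + 1 = i.val then y else 0

theorem tridiag_submatrix_succ (k : ℕ) (x y : R) :
    (tridiag (k + 1) x y).submatrix Fin.succ Fin.succ = tridiag k x y := by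
  ext a b
  simp [tridiag, Fin.succ_inj]

theorem det_tridiag_succ_succ (k : ℕ) (x y : R) :
    (tridiag (k + 2) x y).det = x * (tridiag (k + 1) x y).det - y ^ 2 * (tridiag k x y).det := by
  rw [det_succ_row_zero, Fin.sum_univ_succ, Fin.sum_univ_succ]
  have hfar : ∀ j : Fin k, tridiag (k + 2) x y 0 j.succ.succ = 0 := by
    intro j; simp [tridiag, Fin.ext_iff]
  simp only [hfar, mul_zero, zero_mul, Finset.sum_const_zero, add_zero, Fin.succAbove_zero,
    tridiag_submatrix_succ]
  have hminor : ((tridiag (k + 2) x y).submatrix Fin.succ (Fin.succ 0).succAbove).det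
      = y * (tridiag k x y).det := by
    rw [det_succ_column_zero, Fin.sum_univ_succ]
    have hcol : ∀ i : Fin k, tridiag (k + 2) x y i.succ.succ 0 = 0 := by
      intro i; simp [tridiag, Fin.ext_iff]
    have hshift : ((Fin.succ 0).succAbove ∘ Fin.succ : Fin k → Fin (k + 2)) =
        Fin.succ ∘ Fin.succ :=
      funext (Fin.succ_succAbove_succ 0)
    simp only [submatrix_apply, Fin.succ_succAbove_zero, hcol, mul_zero, zero_mul,
      Finset.sum_const_zero, add_zero, Fin.succAbove_zero]
    rw [submatrix_submatrix, hshift, ← submatrix_submatrix, tridiag_submatrix_succ,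
      tridiag_submatrix_succ]
    simp [tridiag]
  have hdiag : tridiag (k + 2) x y 0 0 = x := by simp [tridiag]
  have hnext : tridiag (k + 2) x y 0 (Fin.succ 0) = y := by simp [tridiag]
  rw [hminor, hdiag, hnext]
  simp only [Fin.val_succ, Fin.val_zero]
  ring

theorem det_tridiag_submatrix_succAbove (k : ℕ) (x y : R) (p : Fin (k + 1)) :
    ((tridiag (k + 1) x y).submatrix p.succAbove p.succAbove).det =
      (tridiag p x y).det * (tridiag (k - p) x y).det := by
  let e : Fin p ⊕ Fin (k - p) ≃ Fin k := finSumFinEquiv.trans (finCongr (by omega))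
  have hval (w : Fin k) : (p.succAbove w : ℕ) = if w.val < p.val then w.val else w.val + 1 := by
    rcases lt_or_ge w.castSucc p with h | h
    · rw [Fin.succAbove_of_castSucc_lt _ _ h, Fin.val_castSucc, if_pos (show w.val < p.val from h)]
    · rw [Fin.succAbove_of_le_castSucc _ _ h, Fin.val_succ,
        if_neg (not_lt.mpr (show p.val ≤ w.val from h))]
  have hblock : ((tridiag (k + 1) x y).submatrix p.succAbove p.succAbove).submatrix e e =
      fromBlocks (tridiag p x y) 0 0 (tridiag (k - p) x y) := by
    ext (a | a) (b | b) <;>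
      have := a.isLt <;> have := b.isLt <;>
      simp only [submatrix_apply, tridiag, of_apply, Fin.ext_iff, hval, e, Equiv.trans_apply,
        finSumFinEquiv_apply_left, finSumFinEquiv_apply_right, finCongr_apply, Fin.val_cast,
        Fin.val_castAdd, Fin.val_natAdd, fromBlocks_apply₁₁, fromBlocks_apply₁₂,
        fromBlocks_apply₂₁, fromBlocks_apply₂₂, Matrix.zero_apply] <;>
      split_ifs <;> first | rfl | omega
  rw [← det_submatrix_equiv_self e, hblock, det_fromBlocks_zero₂₁]

end Tridiagonal

theorem det_tridiag_two_thirds (k : ℕ) :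
    (tridiag k (2 / 3 : ℝ) (-(1 / 3))).det = (k + 1) / 3 ^ k := by
  induction k using Nat.twoStepInduction with
  | zero => simp
  | one => norm_num [det_fin_one, tridiag]
  | more k ih₀ ih₁ =>
    rw [det_tridiag_succ_succ, ih₀, ih₁]
    push_cast
    field_simp
    ring

theorem Matrix.circulant_submatrix_add_right {α n : Type*} [AddGroup n] (v : n → α) (c : n) :
    (circulant v).submatrix (· + c) (· + c) = circulant v := by
  ext i j
  simp [add_sub_add_right_eq_sub]

theorem Matrix.det_submatrix_eq_of_range_eq {l m n R : Type*} [Fintype l] [Fintype m]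
    [DecidableEq l] [DecidableEq m] [CommRing R] (A : Matrix n n R) {f : l → n} {g : m → n}
    (hf : f.Injective) (hg : g.Injective) (h : Set.range f = Set.range g) :
    (A.submatrix f f).det = (A.submatrix g g).det := by
  let e : m ≃ l :=
    (Equiv.ofInjective g hg).trans ((Equiv.setCongr h.symm).trans (Equiv.ofInjective f hf).symm)
  have hfe : f ∘ e = g := funext fun x => by
    simp [e, Equiv.apply_ofInjective_symm]
  rw [← det_submatrix_equiv_self e, submatrix_submatrix, hfe]

theorem Fin.range_succAbove_comp_succAbove {k : ℕ} (q : Fin (k + 2)) (p : Fin (k + 1)) :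
    Set.range (q.succAbove ∘ p.succAbove) = {q, q.succAbove p}ᶜ := by
  rw [Set.range_comp, Fin.range_succAbove, Set.image_compl_eq_range_sdiff_image
    Fin.succAbove_right_injective, Fin.range_succAbove, Set.image_singleton, Set.insert_eq,
    Set.compl_union, Set.sdiff_eq, Set.inter_comm]

theorem LA_eq_circulant (n : ℕ) [NeZero n] :
    LA n = circulant fun k => if k = 0 then 2 / 3 else
      if k.val = 1 ∨ k.val = n - 1 then -(1 / 3) else 0 := by
  ext i j
  simp only [LA, of_apply, circulant_apply, Fin.ext_iff, Fin.val_zero]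
  rcases le_or_gt j i with h | h
  · rw [Fin.coe_sub_iff_le.mpr h]
    split_ifs <;> first | rfl | omega
  · rw [Fin.coe_sub_iff_lt.mpr h]
    split_ifs <;> first | rfl | omega

theorem LA_submatrix_succ (k : ℕ) :
    (LA (k + 1)).submatrix Fin.succ Fin.succ = tridiag k (2 / 3) (-(1 / 3)) := by
  ext a b
  simp only [LA, tridiag, submatrix_apply, of_apply, Fin.succ_inj, Fin.val_succ,
    Nat.add_sub_cancel, Nat.add_one_ne_zero, false_and, and_false, or_false, if_false]
  split_ifs <;> first | rfl | omega

theorem det_LA_submatrix_succAbove_succAbove {m : ℕ} (i j : Fin (m + 2)) (h : i.val < j.val) :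
    ((LA (m + 2)).submatrix (j.succAbove ∘ (⟨i.val, by omega⟩ : Fin (m + 1)).succAbove)
        (j.succAbove ∘ (⟨i.val, by omega⟩ : Fin (m + 1)).succAbove)).det =
      ((j : ℝ) - i) * (m + 2 - (j - i)) / 3 ^ m := by
  set q : Fin (m + 1) := ⟨j - i - 1, by omega⟩ with hq
  have hi : j.succAbove ⟨i.val, by omega⟩ = i :=
    (Fin.succAbove_of_castSucc_lt _ _ h).trans rfl
  have hj : q.succ + i = j := by
    ext
    rw [Fin.val_add, Fin.val_succ, Nat.mod_eq_of_lt] <;> simp only [hq] <;> omega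
  have hrange : Set.range (j.succAbove ∘ (⟨i.val, by omega⟩ : Fin (m + 1)).succAbove) =
      Set.range ((· + i) ∘ Fin.succ ∘ q.succAbove) := by
    rw [Fin.range_succAbove_comp_succAbove, Set.range_comp (· + i), ← Fin.succAbove_zero,
      Fin.range_succAbove_comp_succAbove,
      Set.image_compl_eq (f := (· + i)) (Equiv.addRight i).bijective, Set.image_pair, zero_add,
      Fin.succAbove_zero, hi, hj, Set.pair_comm]
  have hqij : ((q : ℕ) : ℝ) = j - i - 1 := by
    rw [hq, eq_sub_iff_add_eq, eq_sub_iff_add_eq]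
    exact_mod_cast (by omega : j - i - 1 + 1 + i = (j : ℕ))
  calc _ = ((LA (m + 2)).submatrix ((· + i) ∘ Fin.succ ∘ q.succAbove)
          ((· + i) ∘ Fin.succ ∘ q.succAbove)).det :=
        det_submatrix_eq_of_range_eq _
          (Fin.succAbove_right_injective.comp Fin.succAbove_right_injective)
          ((add_left_injective i).comp <| (Fin.succ_injective _).comp Fin.succAbove_right_injective)
          hrange
    _ = ((tridiag (m + 1) (2 / 3 : ℝ) (-(1 / 3))).submatrix q.succAbove q.succAbove).det := by
        rw [← submatrix_submatrix, LA_eq_circulant, circulant_submatrix_add_right,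
          ← LA_eq_circulant, ← submatrix_submatrix, LA_submatrix_succ]
    _ = _ := by
        rw [det_tridiag_submatrix_succAbove, det_tridiag_two_thirds, det_tridiag_two_thirds,
          div_mul_div_comm, ← pow_add, Nat.add_sub_cancel' q.is_le, Nat.cast_sub q.is_le, hqij]
        ring

theorem Fin.sum_prod_ite_val_lt {M : Type*} [AddCommMonoid M] (n : ℕ) (G : ℕ → ℕ → M) :
    ∑ p : Fin n × Fin n, (if p.1.val < p.2.val then G p.1 p.2 else 0) =
      ∑ j ∈ range n, ∑ i ∈ range j, G i j := by
  rw [Fintype.sum_prod_type, Finset.sum_comm,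
    Fin.sum_univ_eq_sum_range (fun j => ∑ i : Fin n, if i.val < j then G i j else 0)]
  refine Finset.sum_congr rfl fun j hj => ?_
  rw [Fin.sum_univ_eq_sum_range (fun i => if i < j then G i j else 0), ← Finset.sum_filter]
  congr 1
  ext i
  simp only [mem_filter, mem_range] at hj ⊢
  omega

theorem sum_range_add_one_mul_sub (N : ℝ) (j : ℕ) :
    ∑ d ∈ range j, ((d : ℝ) + 1) * (N - (d + 1)) =
      N * j * (j + 1) / 2 - j * (j + 1) * (2 * j + 1) / 6 := by
  induction j with
  | zero => simp
  | succ j ih => rw [sum_range_succ, ih]; push_cast; ring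

theorem sum_range_sub_mul_sub (N : ℝ) (j : ℕ) :
    ∑ i ∈ range j, ((j : ℝ) - i) * (N - (j - i)) =
      N * j * (j + 1) / 2 - j * (j + 1) * (2 * j + 1) / 6 := by
  rw [← sum_range_add_one_mul_sub, ← Finset.sum_range_reflect]
  refine Finset.sum_congr rfl fun i hi => ?_
  have hij : i < j := mem_range.mp hi
  rw [Nat.cast_sub (by omega), Nat.cast_sub (by omega)]
  ring

theorem sum_range_sum_range_sub_mul_sub (N : ℝ) (k : ℕ) :
    ∑ j ∈ range k, ∑ i ∈ range j, ((j : ℝ) - i) * (N - (j - i)) =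
      N * (k - 1) * k * (k + 1) / 6 - (k - 1) * k ^ 2 * (k + 1) / 12 := by
  induction k with
  | zero => simp
  | succ k ih => rw [sum_range_succ, ih, sum_range_sub_mul_sub]; push_cast; ring

theorem stmt10 (m : ℕ) :
    ∑ p : Fin (m + 2) × Fin (m + 2),
        (if h : p.1.val < p.2.val then
          ((LA (m + 2)).submatrix
              (p.2.succAbove ∘ (⟨p.1.val, by have := p.2.isLt; omega⟩ : Fin (m + 1)).succAbove)
              (p.2.succAbove ∘ (⟨p.1.val, by have := p.2.isLt; omega⟩ : Fin (m + 1)).succAbove)).det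
         else 0) =
      ((m : ℝ) + 2) ^ 2 * (((m : ℝ) + 2) ^ 2 - 1) / (4 * 3 ^ (m + 1)) := by
  calc _ = ∑ p : Fin (m + 2) × Fin (m + 2), if p.1.val < p.2.val then
          ((p.2 : ℝ) - p.1) * (m + 2 - (p.2 - p.1)) / 3 ^ m else 0 := by
        refine Fintype.sum_congr _ _ fun p => ?_
        split_ifs with h
        · exact det_LA_submatrix_succAbove_succAbove p.1 p.2 h
        · rfl
    _ = (∑ j ∈ range (m + 2), ∑ i ∈ range j, ((j : ℝ) - i) * (m + 2 - (j - i))) /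
          3 ^ m := by
        rw [Fin.sum_prod_ite_val_lt (m + 2)
          fun i j => ((j : ℝ) - i) * (m + 2 - (j - i)) / 3 ^ m]
        simp_rw [Finset.sum_div]
    _ = _ := by
        rw [sum_range_sum_range_sub_mul_sub]
        push_cast
        field_simp
        ring
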